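/- There exists an infinite family of graphs {H_w : w ≥ 1} such that tcw(H_w) ≤ w + 1 and tw(H_w) ≥ w²/16 − 1; hence the treewidth of H_w is Ω(tcw(H_w)²). -/

import Mathlib

open scoped Classical

noncomputable section

/-- A multigraph on vertex type `V`: a set of vertices together with a multiset of
(undirected, loopless) edges, parallel edges being allowed. -/
structure MGraph (V : Type) where
  verts : Set V
  edges : Multiset (Sym2 V)

namespace MGraph

variable {V : Type}

/-- The degree of a vertex: the number of incident edges, with multiplicity. -/
def degree (G : MGraph V) (x : V) : ℕ :=
  (G.edges.filter (fun e => x ∈ e)).card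

/-- The set of neighbours of a vertex. -/
def nbrSet (G : MGraph V) (x : V) : Set V :=
  {y | y ≠ x ∧ s(x, y) ∈ G.edges}

/-- `δ_G(A,B)`: the multiset of edges of `G` with one endpoint in `A` and the other in `B`. -/
def cut (G : MGraph V) (A B : Set V) : Multiset (Sym2 V) :=
  G.edges.filter (fun e => ∃ a ∈ A, ∃ b ∈ B, e = s(a, b))

/-- Adjacency in a multigraph. -/
def Adj (G : MGraph V) (x y : V) : Prop := x ≠ y ∧ s(x, y) ∈ G.edges

/-- Connectivity of a multigraph. -/
def Connected (G : MGraph V) : Prop :=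
  G.verts.Nonempty ∧ ∀ x ∈ G.verts, ∀ y ∈ G.verts, Relation.ReflTransGen G.Adj x y

/-- Deleting a (multi)set of edges from a multigraph. -/
def deleteEdges (G : MGraph V) (F : Multiset (Sym2 V)) : MGraph V :=
  ⟨G.verts, G.edges - F⟩

/-- A multigraph is 3-edge-connected if it is connected and remains connected after
removal of any set of at most 2 edges. -/
def ThreeEdgeConnected (G : MGraph V) : Prop :=
  G.Connected ∧ ∀ F : Multiset (Sym2 V), F ≤ G.edges → Multiset.card F ≤ 2 →
    (G.deleteEdges F).Connected

/-- The induced sub-multigraph on a set of vertices. -/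
def induce (G : MGraph V) (S : Set V) : MGraph V :=
  ⟨G.verts ∩ S, G.edges.filter (fun e => ∀ v ∈ e, v ∈ S)⟩

/-- `∂_G(S)`: the vertices of `S` having a neighbour outside of `S`. -/
def boundary (G : MGraph V) (S : Set V) : Set V :=
  {x | x ∈ S ∧ ∃ u, u ∈ G.verts ∧ u ∉ S ∧ s(x, u) ∈ G.edges}

/-- `|δ_G({x}, V(G)∖S)|`: the number of edges from `x` to the outside of `S`. -/
def bWeight (G : MGraph V) (S : Set V) (x : V) : ℕ :=
  (G.edges.filter (fun e => ∃ u, u ∈ G.verts ∧ u ∉ S ∧ e = s(x, u))).card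

/-- Dissolving step used in the definition of the 3-center of `(G, X)`: a vertex `x ∉ X`
of degree 2 with exactly two (distinct) neighbours `y, z` is removed and the edge `yz`
is added (increasing its multiplicity if it is already present). -/
def DissolveStep (X : Set V) (G G' : MGraph V) : Prop :=
  ∃ x y z, x ∉ X ∧ x ∈ G.verts ∧ y ≠ z ∧ x ≠ y ∧ x ≠ z ∧
    G.edges.filter (fun e => x ∈ e) = {s(x, y), s(x, z)} ∧
    G' = ⟨G.verts \ {x}, G.edges.filter (fun e => x ∉ e) + {s(y, z)}⟩

/-- Deletion step used in the definition of the 3-center of `(G, X)`: a vertex `x ∉ X`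
of degree at most 2 with at most one neighbour is removed. -/
def DeleteStep (X : Set V) (G G' : MGraph V) : Prop :=
  ∃ x, x ∉ X ∧ x ∈ G.verts ∧ G.degree x ≤ 2 ∧ (G.nbrSet x).Subsingleton ∧
    G' = ⟨G.verts \ {x}, G.edges.filter (fun e => x ∉ e)⟩

def CenterStep (X : Set V) (G G' : MGraph V) : Prop :=
  DissolveStep X G G' ∨ DeleteStep X G G'

/-- `H` is a 3-center of `(G, X)` if it is obtained from `G` by repeatedly applying
dissolve/delete steps until none applies. -/
def IsThreeCenter (X : Set V) (G H : MGraph V) : Prop :=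
  Relation.ReflTransGen (CenterStep X) G H ∧ ∀ H', ¬ CenterStep X H H'

/-- `(T, X)` is a tree-cut decomposition of `G`: `T` is a tree and the bags `X t` are
pairwise disjoint with union `V(G)`. -/
def IsTCD {ι : Type} (G : MGraph V) (T : SimpleGraph ι) (X : ι → Set V) : Prop :=
  T.IsTree ∧ (Pairwise fun t t' => Disjoint (X t) (X t')) ∧ (⋃ t, X t) = G.verts

/-- Given a tree edge `{a,b}` of `T`, the union of the bags over the component of
`T - {a,b}` containing `a`. -/
def edgeSide {ι : Type} (T : SimpleGraph ι) (X : ι → Set V) (a b : ι) : Set V :=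
  ⋃ t ∈ {t | (T.deleteEdges {s(a, b)}).Reachable a t}, X t

/-- The adhesion `δ^T({a,b})` of a tree edge of a tree-cut decomposition. -/
def adhesion (G : MGraph V) {ι : Type} (T : SimpleGraph ι) (X : ι → Set V) (a b : ι) :
    Multiset (Sym2 V) :=
  G.cut (edgeSide T X a b) (edgeSide T X b a)

/-- `a` and `b` are connected in `T - t`. -/
def ReachAvoid {ι : Type} (T : SimpleGraph ι) (t a b : ι) : Prop :=
  ∃ (ha : a ∈ ({t}ᶜ : Set ι)) (hb : b ∈ ({t}ᶜ : Set ι)),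
    (T.induce ({t}ᶜ : Set ι)).Reachable ⟨a, ha⟩ ⟨b, hb⟩

/-- The neighbour of `t` indexing the component of `T - t` whose bags contain `v`. -/
def compOf {ι : Type} (T : SimpleGraph ι) (X : ι → Set V) (t : ι) (v : V) : ι :=
  if h : ∃ s, T.Adj t s ∧ ∃ t', v ∈ X t' ∧ ReachAvoid T t s t' then h.choose else t

/-- The identification map used in the definition of the torso at `t`. -/
def torsoMap {ι : Type} (T : SimpleGraph ι) (X : ι → Set V) (t : ι) (v : V) : V ⊕ ι :=
  if v ∈ X t then Sum.inl v else Sum.inr (compOf T X t v)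

/-- The torso of `G` at node `t` of the tree-cut decomposition `(T, X)`: each non-empty
union of bags over a component of `T - t` is identified to a single vertex (components
are indexed by the corresponding neighbour of `t`); parallel edges are kept, loops
are discarded. -/
def torso {ι : Type} (G : MGraph V) (T : SimpleGraph ι) (X : ι → Set V) (t : ι) :
    MGraph (V ⊕ ι) :=
  ⟨Sum.inl '' (X t) ∪
     Sum.inr '' {s | T.Adj t s ∧ ∃ t' v, v ∈ X t' ∧ ReachAvoid T t s t'},
   (G.edges.map (Sym2.map (torsoMap T X t))).filter (fun e => ¬ e.IsDiag)⟩

/-- The width of the tree-cut decomposition `(T, X)` of `G` is at most `w`: all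
adhesions have at most `w` edges and all 3-centers of torsos have at most `w` vertices. -/
def WidthLE {ι : Type} (G : MGraph V) (T : SimpleGraph ι) (X : ι → Set V) (w : ℕ) : Prop :=
  (∀ a b, T.Adj a b → Multiset.card (adhesion G T X a b) ≤ w) ∧
  ∀ t H, IsThreeCenter (Sum.inl '' (X t)) (torso G T X t) H → H.verts.ncard ≤ w

/-- `G` has a tree-cut decomposition of width at most `w`. -/
def tcwLE (G : MGraph V) (w : ℕ) : Prop :=
  ∃ (ι : Type) (_ : Finite ι) (T : SimpleGraph ι) (X : ι → Set V),
    IsTCD G T X ∧ WidthLE G T X w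

/-- The tree-cut width of a multigraph. -/
def tcw (G : MGraph V) : ℕ := sInf {w | tcwLE G w}

/-- A leaf of a tree: a node with exactly one neighbour. -/
def IsLeaf {ι : Type} (T : SimpleGraph ι) (t : ι) : Prop := ∃! s, T.Adj t s

/-- The internal width of `(T, X)` is at most `w`: all adhesions are at most `w` and the
3-center torso sizes of all *non-leaf* nodes are at most `w`. -/
def InWidthLE {ι : Type} (G : MGraph V) (T : SimpleGraph ι) (X : ι → Set V) (w : ℕ) : Prop :=
  (∀ a b, T.Adj a b → Multiset.card (adhesion G T X a b) ≤ w) ∧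
  ∀ t, ¬ IsLeaf T t →
    ∀ H, IsThreeCenter (Sum.inl '' (X t)) (torso G T X t) H → H.verts.ncard ≤ w

/-- A tree-cut decomposition is non-trivial if at least two bags are non-empty. -/
def NonTrivial {ι : Type} (X : ι → Set V) : Prop :=
  ∃ t t', t ≠ t' ∧ (X t).Nonempty ∧ (X t').Nonempty

/-- Identifying the vertex set `S` of `G` into the single vertex `v₀ ∈ S`:
edges inside `S` are deleted (loops discarded), parallel edges are kept. -/
def collapse (G : MGraph V) (S : Set V) (v₀ : V) : MGraph V :=
  ⟨(G.verts \ S) ∪ {v₀},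
   (G.edges.map (Sym2.map (fun x => if x ∈ S then v₀ else x))).filter (fun e => ¬ e.IsDiag)⟩

/-- One step of taking an immersion: deleting an edge, deleting a vertex, or lifting a
pair of edges `{x,v}, {v,y}` to the single edge `{x,y}`. -/
def ImmStep (G G' : MGraph V) : Prop :=
  (∃ e ∈ G.edges, G' = ⟨G.verts, G.edges.erase e⟩) ∨
  (∃ v ∈ G.verts, G' = ⟨G.verts \ {v}, G.edges.filter (fun e => v ∉ e)⟩) ∨
  (∃ x v y, x ≠ v ∧ y ≠ v ∧ x ≠ y ∧ s(x, v) ∈ G.edges ∧ s(v, y) ∈ G.edges.erase s(x, v) ∧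
    G' = ⟨G.verts, s(x, y) ::ₘ ((G.edges.erase s(x, v)).erase s(v, y))⟩)

/-- `H` is an immersion of `G`. -/
def IsImmersion (H G : MGraph V) : Prop := Relation.ReflTransGen ImmStep G H

end MGraph

/-- The multigraph associated to a simple graph. -/
def SimpleGraph.toMGraph {α : Type} [Fintype α] (G : SimpleGraph α) : MGraph α :=
  ⟨Set.univ, (Set.toFinite G.edgeSet).toFinset.val⟩

/-- The star with `ℓ` leaves: center `none`, leaves `some i`. -/
def starGraph (ℓ : ℕ) : SimpleGraph (Option (Fin ℓ)) :=
  SimpleGraph.fromRel (fun a _ => a = none)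

/-- The graph `H_w`: `w` disjoint cliques `Q_i = {(i,j) : j}` of size `w`, together with
the cross edges `{(i,j),(j,i)}` for `i ≠ j`. -/
def Hw (w : ℕ) : SimpleGraph (Fin w × Fin w) :=
  SimpleGraph.fromRel (fun p q => p.1 = q.1 ∨ (q.1 = p.2 ∧ q.2 = p.1))

/-- Two vertex sets touch in `G`: they intersect or are joined by an edge. -/
def Touch {α : Type} (G : SimpleGraph α) (A B : Set α) : Prop :=
  (A ∩ B).Nonempty ∨ ∃ a ∈ A, ∃ b ∈ B, G.Adj a b

/-- A bramble: a collection of (vertex sets of) connected subgraphs pairwise touching. -/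
def IsBramble {α : Type} (G : SimpleGraph α) (ℬ : Set (Set α)) : Prop :=
  (∀ A ∈ ℬ, (G.induce A).Connected) ∧ ∀ A ∈ ℬ, ∀ B ∈ ℬ, Touch G A B

/-- `B(i,Z) = {(i,j) : j ∈ Z} ∪ {(j,i) : j ∈ Z}`. -/
def Bset (w : ℕ) (i : Fin w) (Z : Finset (Fin w)) : Set (Fin w × Fin w) :=
  {p | (p.1 = i ∧ p.2 ∈ Z) ∨ (p.2 = i ∧ p.1 ∈ Z)}

/-- The bramble `B_w = {H_w[B(i,Z)] : i ∈ [w], Z ⊆ [w]∖{i}, |Z| = w/2}`. -/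
def Bfam (w : ℕ) : Set (Set (Fin w × Fin w)) :=
  {A | ∃ (i : Fin w) (Z : Finset (Fin w)), i ∉ Z ∧ Z.card = w / 2 ∧ A = Bset w i Z}

/-- `(T, Y)` is a tree decomposition of the simple graph `G`. -/
def IsTreeDecomp {α ι : Type} (G : SimpleGraph α) (T : SimpleGraph ι) (Y : ι → Set α) : Prop :=
  T.IsTree ∧ (∀ v, ∃ x, v ∈ Y x) ∧
  (∀ u v, G.Adj u v → ∃ x, u ∈ Y x ∧ v ∈ Y x) ∧
  (∀ v, (T.induce {x | v ∈ Y x}).Connected)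

/-- `G` has treewidth at most `k`. -/
def twLE {α : Type} (G : SimpleGraph α) (k : ℕ) : Prop :=
  ∃ (ι : Type) (_ : Finite ι) (T : SimpleGraph ι) (Y : ι → Set α),
    IsTreeDecomp G T Y ∧ ∀ x, (Y x).ncard ≤ k + 1

end
noncomputable section
open scoped Classical

namespace MGraph

variable {V : Type}

/-- The weight function `γ'` of Lemma 4: `γ'(v) = |δ_G({v}, V(G)∖S)|` for `v ∈ S`,
and `0` otherwise. -/
def gammaExt (G : MGraph V) (S : Set V) (v : V) : ℕ :=
  if v ∈ S then G.bWeight S v else 0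

/-- `γ'(T_b)` where `T_b` is the component of `T - {a,b}` containing `b`. -/
def sideWeight (G : MGraph V) {ι : Type} (T : SimpleGraph ι) (X : ι → Set V)
    (S : Set V) (a b : ι) : ℕ :=
  ∑ᶠ t ∈ {t | (T.deleteEdges {s(a, b)}).Reachable b t}, ∑ᶠ v ∈ X t, G.gammaExt S v

/-- The edge `{x,y}` of `T` is oriented from `x` to `y` by Rule 1 (`γ'(T_y) > w`) or by
Rule 2 (`S` avoids all the bags on the `x`-side). -/
def ruleOrient (G : MGraph V) {ι : Type} (T : SimpleGraph ι) (X : ι → Set V)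
    (S : Set V) (w : ℕ) (x y : ι) : Prop :=
  w < G.sideWeight T X S x y ∨ S ∩ edgeSide T X x y = ∅

end MGraph

/-- The tree obtained from `T` by attaching `ℓ` new leaves to the node `t`
(`t` plays the role of the center of the star replacing the former leaf `t`). -/
def refineTree {ι : Type} (T : SimpleGraph ι) (t : ι) (ℓ : ℕ) : SimpleGraph (ι ⊕ Fin ℓ) :=
  SimpleGraph.fromRel (fun a b =>
    (∃ i j, a = Sum.inl i ∧ b = Sum.inl j ∧ T.Adj i j) ∨
    (a = Sum.inl t ∧ ∃ i, b = Sum.inr i))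

/-- The bags of the refined decomposition: the bag of the former leaf `t` is replaced by
the central bag `Xs none` of the star decomposition, the new leaves get the leaf bags. -/
def refineBags {V ι : Type} (X : ι → Set V) (t : ι) {ℓ : ℕ}
    (Xs : Option (Fin ℓ) → Set V) : ι ⊕ Fin ℓ → Set V :=
  fun s => Sum.rec (fun a => if a = t then Xs none else X a) (fun i => Xs (some i)) s

/-- `w = n³/2 + k`, the target width in the Min Bisection reduction. -/
def bisectW (n k : ℕ) : ℕ := n ^ 3 / 2 + k

/-- The vertex type of the graph `G'` of the Min Bisection reduction:
`V = Fin n`, `Q = Fin (w-2)`, and a set `C_{x,y}` of `w+1` vertices for each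
(unordered) pair `x < y` of vertices of `Q`. -/
abbrev BisV (n w : ℕ) : Type :=
  Fin n ⊕ (Fin (w - 2) ⊕ (({p : Fin (w - 2) × Fin (w - 2) // p.1 < p.2}) × Fin (w + 1)))

/-- The (one-directional) edge relation of `G'`: `V` induces a copy of `G`; each vertex
`a ∈ V` is adjacent to the `n²` vertices `f a ⊆ Q`; every vertex of `C_{x,y}` is
adjacent to both `x` and `y`. -/
def bisectR {n : ℕ} (G : SimpleGraph (Fin n)) (w : ℕ) (f : Fin n → Finset (Fin (w - 2))) :
    BisV n w → BisV n w → Prop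
  | Sum.inl a, Sum.inl b => G.Adj a b
  | Sum.inl a, Sum.inr (Sum.inl q) => q ∈ f a
  | Sum.inr (Sum.inl q), Sum.inr (Sum.inr c) => q = c.1.1.1 ∨ q = c.1.1.2
  | _, _ => False

/-- The graph `G'` of the Min Bisection reduction. -/
def bisectG {n : ℕ} (G : SimpleGraph (Fin n)) (w : ℕ) (f : Fin n → Finset (Fin (w - 2))) :
    SimpleGraph (BisV n w) :=
  SimpleGraph.fromRel (bisectR G w f)

/-- The multiset of edges used by a walk, given as its list of vertices. -/
def walkEdges {V : Type} (l : List V) : Multiset (Sym2 V) :=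
  ↑((l.zip l.tail).map fun p => s(p.1, p.2))

end

noncomputable section
open scoped Classical
open MGraph

/-!
For the tree-cut width, take the star whose centre has an empty bag and whose leaves carry the
cliques `Q_i`: the only edges leaving `Q_i` are the edges `(i, j)(j, i)`, and every torso has at
most `w + 1` vertices. For the treewidth, the sets `B(i, Z)` form a bramble of `H_w`, some bag of
every tree decomposition meets all of its elements, and a set meeting every `B(i, Z)` has at least
`w² / 4` vertices.
-/

namespace SimpleGraph

variable {ι : Type} {T : SimpleGraph ι}

lemma reachable_deleteEdges_of_walk {x y a b : ι} (p : T.Walk a b) (hx : x ∉ p.support) :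
    (T.deleteEdges {s(x, y)}).Reachable a b :=
  ⟨p.toDeleteEdge _ fun he => hx (p.fst_mem_support_of_mem_edges he)⟩

lemma reachable_deleteEdges_of_reachable_induce {S : Set ι} {x y : ι} (hx : x ∉ S) {a b : S}
    (h : (T.induce S).Reachable a b) : (T.deleteEdges {s(x, y)}).Reachable a b :=
  h.map (⟨Subtype.val, fun {a b} hab => (deleteEdges_adj ..).mpr ⟨hab, fun he => by
    have hxab : x ∈ s(a.1, b.1) := (Set.mem_singleton_iff.mp he) ▸ Sym2.mem_mk_left x y
    rcases Sym2.mem_iff.mp hxab with rfl | rfl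
    exacts [hx a.2, hx b.2]⟩⟩ : T.induce S →g T.deleteEdges {s(x, y)})

lemma IsTree.exists_adj_forall_reachable_deleteEdges (hT : T.IsTree) {S : Set ι}
    (hS : (T.induce S).Connected) {x : ι} (hx : x ∉ S) :
    ∃ y, T.Adj x y ∧ ∀ z ∈ S, (T.deleteEdges {s(x, y)}).Reachable y z := by
  obtain ⟨⟨z₀, hz₀⟩⟩ := hS.nonempty
  obtain ⟨p, hp⟩ := (hT.connected.preconnected x z₀).some.toPath
  cases p with
  | nil => exact absurd hz₀ hx
  | cons hxy q =>
    refine ⟨_, hxy, fun z hz => ?_⟩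
    exact (reachable_deleteEdges_of_walk q (Walk.cons_isPath_iff _ _ |>.mp hp).2).trans
      (reachable_deleteEdges_of_reachable_induce hx (hS.preconnected ⟨z₀, hz₀⟩ ⟨z, hz⟩))

lemma IsTree.exists_apply_apply_eq [Finite ι] (hT : T.IsTree) {f : ι → ι}
    (hf : ∀ x, T.Adj x (f x)) : ∃ x, f (f x) = x := by
  have := Fintype.ofFinite ι
  have hcard : Fintype.card T.edgeSet < Fintype.card ι := by
    rw [← hT.card_edgeFinset, edgeFinset_card]
    exact Nat.lt_succ_self _
  obtain ⟨x, x', hne, heq⟩ :=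
    Fintype.exists_ne_map_eq_of_card_lt (fun x => (⟨s(x, f x), hf x⟩ : T.edgeSet)) hcard
  rcases Sym2.eq_iff.mp (Subtype.mk.inj heq) with ⟨h, -⟩ | ⟨h₁, h₂⟩
  · exact absurd h hne
  · exact ⟨x, by rw [h₂, ← h₁]⟩

end SimpleGraph

namespace IsTreeDecomp

open SimpleGraph

variable {α ι : Type} {G : SimpleGraph α} {T : SimpleGraph ι} {Y : ι → Set α}

lemma connected_induce_meets (hY : IsTreeDecomp G T Y) {B : Set α}
    (hB : (G.induce B).Connected) : (T.induce {x | (Y x ∩ B).Nonempty}).Connected := by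
  obtain ⟨-, hcover, hedge, hconn⟩ := hY
  set N := {x | (Y x ∩ B).Nonempty}
  have hbags : ∀ v (hv : v ∈ B) z z' (hz : v ∈ Y z) (hz' : v ∈ Y z'),
      (T.induce N).Reachable ⟨z, v, hz, hv⟩ ⟨z', v, hz', hv⟩ := fun v hv z z' hz hz' =>
    ((hconn v).preconnected ⟨z, hz⟩ ⟨z', hz'⟩).map
      (T.induceHomOfLE fun x (hx : v ∈ Y x) => (⟨v, hx, hv⟩ : x ∈ N)).toHom
  obtain ⟨⟨v₀, hv₀⟩⟩ := hB.nonempty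
  obtain ⟨z₀, hz₀⟩ := hcover v₀
  rw [connected_iff_exists_forall_reachable]
  refine ⟨⟨z₀, v₀, hz₀, hv₀⟩, ?_⟩
  suffices ∀ v : B, ∀ z (hz : v.1 ∈ Y z),
      (T.induce N).Reachable ⟨z₀, v₀, hz₀, hv₀⟩ ⟨z, v, hz, v.2⟩ by
    rintro ⟨z, v, hz, hv⟩
    exact this ⟨v, hv⟩ z hz
  intro v
  induction (reachable_iff_reflTransGen _ _).mp (hB.preconnected ⟨v₀, hv₀⟩ v) with
  | refl => exact fun z hz => hbags v₀ hv₀ z₀ z hz₀ hz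
  | tail _ huv ih =>
    intro z hz
    obtain ⟨z₁, hu, hv⟩ := hedge _ _ huv
    exact (ih z₁ hu).trans (hbags _ (Subtype.prop _) z₁ z hv hz)

lemma exists_meets_of_touch (hY : IsTreeDecomp G T Y) {A B : Set α} (h : Touch G A B) :
    ∃ z, (Y z ∩ A).Nonempty ∧ (Y z ∩ B).Nonempty := by
  rcases h with ⟨v, hvA, hvB⟩ | ⟨a, ha, b, hb, hab⟩
  · obtain ⟨z, hz⟩ := hY.2.1 v
    exact ⟨z, ⟨v, hz, hvA⟩, v, hz, hvB⟩
  · obtain ⟨z, hza, hzb⟩ := hY.2.2.1 a b hab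
    exact ⟨z, ⟨a, hza, ha⟩, b, hzb, hb⟩

/-- If every bag `Y x` missed some `A x ∈ ℬ`, send `x` to its neighbour towards the subtree of
nodes whose bags meet `A x`. Some edge `x y` is sent both ways, so the subtrees for `A x` and
`A y` lie on opposite sides of it; but touching sets share a bag. -/
theorem exists_bag_meets_bramble [Finite ι] (hY : IsTreeDecomp G T Y) {ℬ : Set (Set α)}
    (hℬ : IsBramble G ℬ) : ∃ x, ∀ A ∈ ℬ, (Y x ∩ A).Nonempty := by
  by_contra! h
  choose A hAℬ hAx using h
  choose f hf hreach using fun x =>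
    hY.1.exists_adj_forall_reachable_deleteEdges (hY.connected_induce_meets (hℬ.1 _ (hAℬ x)))
      (x := x) fun hx => hx.ne_empty (hAx x)
  obtain ⟨x, hx⟩ := hY.1.exists_apply_apply_eq hf
  obtain ⟨z, hzx, hzy⟩ := hY.exists_meets_of_touch (hℬ.2 _ (hAℬ x) _ (hAℬ (f x)))
  have hfx := hreach x z hzx
  have hffx := hreach (f x) z hzy
  rw [hx, Sym2.eq_swap] at hffx
  exact isBridge_iff.mp (isAcyclic_iff_forall_adj_isBridge.mp hY.1.isAcyclic (hf x))
    (hffx.trans hfx.symm)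

end IsTreeDecomp

namespace MGraph

variable {V ι : Type}

lemma CenterStep.verts_subset {X : Set V} {G G' : MGraph V} (h : CenterStep X G G') :
    G'.verts ⊆ G.verts := by
  rcases h with ⟨_, _, _, -, -, -, -, -, -, rfl⟩ | ⟨_, -, -, -, -, rfl⟩ <;>
    exact Set.sdiff_subset

lemma IsThreeCenter.verts_subset {X : Set V} {G H : MGraph V} (h : IsThreeCenter X G H) :
    H.verts ⊆ G.verts := by
  obtain ⟨h, -⟩ := h
  induction h with
  | refl => exact subset_rfl
  | tail _ hstep ih => exact hstep.verts_subset.trans ih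

lemma IsThreeCenter.ncard_verts_torso_le [Finite V] [Finite ι] {G : MGraph V}
    {T : SimpleGraph ι} {X : ι → Set V} {t : ι} {H : MGraph (V ⊕ ι)}
    (h : IsThreeCenter (Sum.inl '' X t) (G.torso T X t) H) :
    H.verts.ncard ≤ (X t).ncard + {s | T.Adj t s}.ncard :=
  calc H.verts.ncard ≤ (G.torso T X t).verts.ncard := Set.ncard_le_ncard h.verts_subset
    _ ≤ _ := (Set.ncard_union_le _ _).trans (add_le_add (Set.ncard_image_le (Set.toFinite _))
      ((Set.ncard_image_le (Set.toFinite _)).trans (Set.ncard_le_ncard fun _ hs => hs.1)))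

lemma cut_comm (G : MGraph V) (A B : Set V) : G.cut A B = G.cut B A :=
  Multiset.filter_congr fun _ _ =>
    ⟨fun ⟨a, ha, b, hb, he⟩ => ⟨b, hb, a, ha, he.trans Sym2.eq_swap⟩,
     fun ⟨b, hb, a, ha, he⟩ => ⟨a, ha, b, hb, he.trans Sym2.eq_swap⟩⟩

lemma mem_cut {G : MGraph V} {A B : Set V} {e : Sym2 V} :
    e ∈ G.cut A B ↔ e ∈ G.edges ∧ ∃ a ∈ A, ∃ b ∈ B, e = s(a, b) :=
  Multiset.mem_filter

lemma nodup_cut {G : MGraph V} (h : G.edges.Nodup) (A B : Set V) : (G.cut A B).Nodup :=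
  h.filter _

lemma adhesion_comm (G : MGraph V) (T : SimpleGraph ι) (X : ι → Set V) (a b : ι) :
    adhesion G T X a b = adhesion G T X b a :=
  cut_comm _ _ _

end MGraph

section Hw

open Finset SimpleGraph

variable {w : ℕ}

lemma hw_adj_of_fst_eq {p q : Fin w × Fin w} (hpq : p ≠ q) (h : p.1 = q.1) : (Hw w).Adj p q :=
  (fromRel_adj ..).mpr ⟨hpq, Or.inl (Or.inl h)⟩

lemma hw_adj_swap {i j : Fin w} (hij : i ≠ j) : (Hw w).Adj (i, j) (j, i) :=
  (fromRel_adj ..).mpr ⟨fun h => hij (Prod.ext_iff.mp h).1, Or.inl (Or.inr ⟨rfl, rfl⟩)⟩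

lemma hw_eq_swap_of_adj {p q : Fin w × Fin w} (h : (Hw w).Adj p q) (hpq : p.1 ≠ q.1) :
    q = (p.2, p.1) := by
  obtain ⟨-, (h | ⟨h₁, h₂⟩) | (h | ⟨h₁, h₂⟩)⟩ := (fromRel_adj ..).mp h
  · exact absurd h hpq
  · exact Prod.ext h₁ h₂
  · exact absurd h.symm hpq
  · exact Prod.ext h₂.symm h₁.symm

lemma touch_hw_of_fst_eq {A B : Set (Fin w × Fin w)} {p q : Fin w × Fin w} (hp : p ∈ A)
    (hq : q ∈ B) (h : p.1 = q.1) : Touch (Hw w) A B := by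
  by_cases hpq : p = q
  · exact Or.inl ⟨p, hp, hpq ▸ hq⟩
  · exact Or.inr ⟨p, hp, q, hq, hw_adj_of_fst_eq hpq h⟩

lemma exists_mem_bset_fst_eq {i a : Fin w} {Z : Finset (Fin w)} (hZ : Z.Nonempty)
    (ha : a ∈ insert i Z) : ∃ p ∈ Bset w i Z, p.1 = a := by
  rcases mem_insert.mp ha with rfl | ha
  · obtain ⟨j, hj⟩ := hZ
    exact ⟨(a, j), Or.inl ⟨rfl, hj⟩, rfl⟩
  · exact ⟨(a, i), Or.inr ⟨rfl, ha⟩, rfl⟩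

lemma connected_induce_bset {i : Fin w} {Z : Finset (Fin w)} (hiZ : i ∉ Z) (hZ : Z.Nonempty) :
    ((Hw w).induce (Bset w i Z)).Connected := by
  obtain ⟨j₀, hj₀⟩ := hZ
  rw [connected_iff_exists_forall_reachable]
  refine ⟨⟨(i, j₀), Or.inl ⟨rfl, hj₀⟩⟩, ?_⟩
  have hrow : ∀ j (hj : j ∈ Z), ((Hw w).induce (Bset w i Z)).Reachable
      ⟨(i, j₀), Or.inl ⟨rfl, hj₀⟩⟩ ⟨(i, j), Or.inl ⟨rfl, hj⟩⟩ := by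
    intro j hj
    by_cases h : j₀ = j
    · subst h
      rfl
    · exact Adj.reachable (hw_adj_of_fst_eq (by simpa using h) rfl)
  rintro ⟨⟨a, b⟩, ⟨rfl, hb⟩ | ⟨rfl, ha⟩⟩
  · exact hrow b hb
  · exact (hrow a ha).trans (Adj.reachable (hw_adj_swap (ne_of_mem_of_not_mem ha hiZ).symm))

/-- Each `B(i, Z)` has vertices in the `w / 2 + 1` cliques `Q_a`, `a ∈ insert i Z`, so any
two of them meet a common clique. -/
lemma isBramble_bfam (hw : 2 ≤ w) : IsBramble (Hw w) (Bfam w) := by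
  have hZ : ∀ {Z : Finset (Fin w)}, #Z = w / 2 → Z.Nonempty := fun h => card_pos.mp (by omega)
  refine ⟨?_, ?_⟩
  · rintro _ ⟨i, Z, hiZ, hcard, rfl⟩
    exact connected_induce_bset hiZ (hZ hcard)
  · rintro _ ⟨i, Z, hiZ, hcard, rfl⟩ _ ⟨i', Z', hiZ', hcard', rfl⟩
    obtain ⟨a, ha⟩ := inter_nonempty_of_card_lt_card_add_card (subset_univ (insert i Z))
      (subset_univ (insert i' Z')) (by
        rw [card_insert_of_notMem hiZ, card_insert_of_notMem hiZ', hcard, hcard', card_univ,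
          Fintype.card_fin]
        omega)
    obtain ⟨p, hp, hpa⟩ := exists_mem_bset_fst_eq (hZ hcard) (mem_inter.mp ha).1
    obtain ⟨q, hq, hqa⟩ := exists_mem_bset_fst_eq (hZ hcard') (mem_inter.mp ha).2
    exact touch_hw_of_fst_eq hp hq (hpa.trans hqa.symm)

section Counting

variable (S : Finset (Fin w × Fin w))

lemma sub_half_le_card_filter_meets (hS : ∀ A ∈ Bfam w, ((S : Set _) ∩ A).Nonempty)
    (i : Fin w) : w - w / 2 ≤ #{j ∈ univ.erase i | (i, j) ∈ S ∨ (j, i) ∈ S} := by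
  have hmiss : #{j ∈ univ.erase i | ¬((i, j) ∈ S ∨ (j, i) ∈ S)} < w / 2 := by
    by_contra h
    obtain ⟨Z, hZ, hcard⟩ := exists_subset_card_eq (not_lt.mp h)
    have hiZ : i ∉ Z := fun hi => by simpa using hZ hi
    obtain ⟨⟨a, b⟩, hpS, hp⟩ := hS _ ⟨i, Z, hiZ, hcard, rfl⟩
    rcases hp with ⟨rfl, hb⟩ | ⟨rfl, ha⟩
    · exact (mem_filter.mp (hZ hb)).2 (Or.inl hpS)
    · exact (mem_filter.mp (hZ ha)).2 (Or.inr hpS)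
  have htotal := card_filter_add_card_filter_not (s := univ.erase i)
    (fun j => (i, j) ∈ S ∨ (j, i) ∈ S)
  rw [card_erase_of_mem (mem_univ i), card_univ, Fintype.card_fin] at htotal
  omega

lemma card_filter_meets_le (i : Fin w) :
    #{j ∈ univ.erase i | (i, j) ∈ S ∨ (j, i) ∈ S} ≤
      #{p ∈ S | p.1 = i} + #{p ∈ S | p.2 = i} := by
  calc _ ≤ #({p ∈ S | p.1 = i}.image Prod.snd ∪ {p ∈ S | p.2 = i}.image Prod.fst) := by
        refine card_le_card fun j hj => ?_
        rcases (mem_filter.mp hj).2 with h | h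
        · exact mem_union_left _ (mem_image.mpr ⟨_, mem_filter.mpr ⟨h, rfl⟩, rfl⟩)
        · exact mem_union_right _ (mem_image.mpr ⟨_, mem_filter.mpr ⟨h, rfl⟩, rfl⟩)
    _ ≤ _ := (card_union_le _ _).trans (add_le_add card_image_le card_image_le)

lemma sq_le_four_mul_card_of_meets_bfam (hS : ∀ A ∈ Bfam w, ((S : Set _) ∩ A).Nonempty) :
    w ^ 2 ≤ 4 * #S := by
  have hsum : w * (w - w / 2) ≤ 2 * #S :=
    calc w * (w - w / 2) = ∑ _i : Fin w, (w - w / 2) := by simp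
      _ ≤ ∑ i, #{j ∈ univ.erase i | (i, j) ∈ S ∨ (j, i) ∈ S} :=
        sum_le_sum fun i _ => sub_half_le_card_filter_meets S hS i
      _ ≤ ∑ i, (#{p ∈ S | p.1 = i} + #{p ∈ S | p.2 = i}) :=
        sum_le_sum fun i _ => card_filter_meets_le S i
      _ = 2 * #S := by
        rw [sum_add_distrib, ← card_eq_sum_card_fiberwise fun _ _ => mem_univ _,
          ← card_eq_sum_card_fiberwise fun _ _ => mem_univ _, two_mul]
  have : w ≤ 2 * (w - w / 2) := by omega
  nlinarith

end Counting

lemma sq_le_four_mul_succ_of_twLE_hw {k : ℕ} (hk : twLE (Hw w) k) : w ^ 2 ≤ 4 * (k + 1) := by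
  rcases lt_or_ge w 2 with hw | hw
  · interval_cases w <;> omega
  obtain ⟨ι, _, T, Y, hY, hbag⟩ := hk
  obtain ⟨x, hx⟩ := hY.exists_bag_meets_bramble (isBramble_bfam hw)
  calc w ^ 2 ≤ 4 * #(Y x).toFinset := sq_le_four_mul_card_of_meets_bfam _ (by simpa using hx)
    _ ≤ 4 * (k + 1) := by
      rw [← Set.ncard_eq_toFinset_card']
      exact Nat.mul_le_mul_left 4 (hbag x)

end Hw


section StarDecomposition

open Finset

variable {w : ℕ}

lemma starGraph_eq (ℓ : ℕ) : starGraph ℓ = SimpleGraph.starGraph none := rfl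

lemma eq_of_reachable_deleteEdges_starGraph {ℓ : ℕ} {i : Fin ℓ} {t : Option (Fin ℓ)}
    (h : ((starGraph ℓ).deleteEdges {s(some i, none)}).Reachable (some i) t) : t = some i := by
  by_contra hne
  obtain ⟨u, hu⟩ := h.nonempty_neighborSet_left (Ne.symm hne)
  rw [SimpleGraph.mem_neighborSet, SimpleGraph.deleteEdges_adj, starGraph_eq,
    SimpleGraph.starGraph_adj] at hu
  obtain ⟨⟨-, h | rfl⟩, hu⟩ := hu
  · exact Option.some_ne_none i h
  · exact hu rfl

lemma not_reachable_deleteEdges_starGraph {ℓ : ℕ} (i : Fin ℓ) :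
    ¬((starGraph ℓ).deleteEdges {s(none, some i)}).Reachable none (some i) := fun h =>
  Option.some_ne_none i (eq_of_reachable_deleteEdges_starGraph (Sym2.eq_swap ▸ h.symm)).symm

def rowBags (w : ℕ) (t : Option (Fin w)) : Set (Fin w × Fin w) := {p | some p.1 = t}

lemma isTCD_rowBags (w : ℕ) : IsTCD (Hw w).toMGraph (starGraph w) (rowBags w) :=
  ⟨SimpleGraph.isTree_starGraph none,
   fun _ _ htt => Set.disjoint_left.mpr fun _ hp hp' => htt (hp.symm.trans hp'),
   Set.eq_univ_of_forall fun p => Set.mem_iUnion.mpr ⟨some p.1, rfl⟩⟩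

lemma mem_edgeSide_rowBags {a b : Option (Fin w)} {p : Fin w × Fin w} :
    p ∈ edgeSide (starGraph w) (rowBags w) a b ↔
      ((starGraph w).deleteEdges {s(a, b)}).Reachable a (some p.1) := by
  simp [edgeSide, rowBags]

lemma card_cut_hw_le {i : Fin w} {A B : Set (Fin w × Fin w)} (hA : ∀ p ∈ A, p.1 = i)
    (hB : ∀ q ∈ B, q.1 ≠ i) : Multiset.card ((Hw w).toMGraph.cut A B) ≤ w := by
  have hsub : ∀ e ∈ (Hw w).toMGraph.cut A B, e ∈ univ.image fun j => s((i, j), (j, i)) := by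
    intro e he
    obtain ⟨he, a, ha, b, hb, rfl⟩ := MGraph.mem_cut.mp he
    have hab : (Hw w).Adj a b := by
      simpa [SimpleGraph.toMGraph] using he
    have hb' := hw_eq_swap_of_adj hab (by rw [hA a ha]; exact (hB b hb).symm)
    refine mem_image.mpr ⟨a.2, mem_univ _, ?_⟩
    rw [hb', ← hA a ha]
  have hnodup : ((Hw w).toMGraph.cut A B).Nodup :=
    MGraph.nodup_cut (Set.toFinite _).toFinset.nodup A B
  calc Multiset.card ((Hw w).toMGraph.cut A B) = #⟨_, hnodup⟩ := rfl
    _ ≤ #(univ.image fun j => s((i, j), (j, i))) := card_le_card hsub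
    _ ≤ w := card_image_le.trans (card_univ.trans (Fintype.card_fin w)).le

lemma card_adhesion_rowBags_le (i : Fin w) :
    Multiset.card (adhesion (Hw w).toMGraph (starGraph w) (rowBags w) (some i) none) ≤ w :=
  card_cut_hw_le
    (fun _ hp => Option.some_injective _ (eq_of_reachable_deleteEdges_starGraph
      (mem_edgeSide_rowBags.mp hp)))
    (fun q hq hqi => not_reachable_deleteEdges_starGraph i (by
      have hq := mem_edgeSide_rowBags.mp hq
      rwa [hqi] at hq))

lemma tcwLE_hw (w : ℕ) : tcwLE (Hw w).toMGraph (w + 1) := by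
  refine ⟨Option (Fin w), inferInstance, starGraph w, rowBags w, isTCD_rowBags w, ?_, ?_⟩
  · intro a b hab
    rw [starGraph_eq, SimpleGraph.starGraph_adj] at hab
    obtain ⟨hne, rfl | rfl⟩ := hab
    · obtain ⟨i, rfl⟩ := Option.ne_none_iff_exists'.mp hne.symm
      rw [adhesion_comm]
      exact (card_adhesion_rowBags_le i).trans (Nat.le_succ w)
    · obtain ⟨i, rfl⟩ := Option.ne_none_iff_exists'.mp hne
      exact (card_adhesion_rowBags_le i).trans (Nat.le_succ w)
  · intro t H hH
    refine hH.ncard_verts_torso_le.trans ?_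
    cases t with
    | none =>
      have hbag : rowBags w none = ∅ := Set.eq_empty_of_forall_notMem fun _ h => nomatch h
      rw [hbag, Set.ncard_empty, zero_add]
      exact (Set.ncard_le_ncard (Set.subset_univ _)).trans (by simp [Set.ncard_univ])
    | some i =>
      have hbag : rowBags w (some i) = Set.range (Prod.mk i) := by
        ext ⟨a, b⟩
        simp [rowBags, eq_comm]
      have hnbr : {s | (starGraph w).Adj (some i) s} ⊆ {none} := fun s hs => by
        rw [Set.mem_ofPred_eq, starGraph_eq, SimpleGraph.starGraph_adj] at hs
        simpa using hs.2
      rw [hbag, Set.ncard_range_of_injective (Prod.mk_right_injective i),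
        Nat.card_eq_fintype_card, Fintype.card_fin]
      exact Nat.add_le_add_left ((Set.ncard_le_ncard hnbr).trans (Set.ncard_singleton _).le) w

end StarDecomposition

theorem exists_family_tw_quadratic_in_tcw :
    ∃ H : (w : ℕ) → SimpleGraph (Fin w × Fin w),
      ∀ w : ℕ, 1 ≤ w →
        tcw (H w).toMGraph ≤ w + 1 ∧
        ∀ k : ℕ, twLE (H w) k → (w : ℝ) ^ 2 / 16 - 1 ≤ k := by
  refine ⟨Hw, fun w _ => ⟨Nat.sInf_le (tcwLE_hw w), fun k hk => ?_⟩⟩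
  have h : (w : ℝ) ^ 2 ≤ 4 * (k + 1) := by exact_mod_cast sq_le_four_mul_succ_of_twLE_hw hk
  linarith [(Nat.cast_nonneg k : (0 : ℝ) ≤ k)]

end
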